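/- Let P be a set of point trajectories satisfying the pseudo-algebraic and general position assumptions, and let p,q,a,b ∈ P be distinct. Suppose that the Delaunayhood of pq is violated by a and b (with a ∈ L⁻_pq and b ∈ L⁺_pq) at all times in some nonempty interval (t₀, t₀+δ), and that pq is Delaunay with respect to P at some time t₁ > t₀. Then at least one of the following occurs at some time in (t₀, t₁]: (1) a lies on the segment p(t)q(t), crossing it from L⁻_pq to L⁺_pq; (2) b lies on the segment p(t)q(t), crossing it from L⁺_pq to L⁻_pq; (3) the four points p,q,a,b are concyclic, with a and b strictly on opposite sides of the line through p and q. -/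

import Mathlib

/-!
Kinetic Delaunay triangulations of points moving in the plane:
common definitions (trajectories, Delaunay edges, co-circularity and
collinearity events, general position assumptions, Delaunay crossings).
-/

noncomputable section

attribute [local instance] Classical.propDecidable

/-- The Euclidean plane. -/
abbrev Plane : Type := EuclideanSpace ℝ (Fin 2)

/-- A point trajectory: a moving point in the plane, parametrized by time. -/
abbrev Traj : Type := ℝ → Plane

/-- Signed orientation of `x` with respect to the line through `a` and `b`,
oriented from `a` to `b`; positive iff `x` lies in the open left halfplane `L⁻`. -/
def orient (a b x : Plane) : ℝ :=
  (b 0 - a 0) * (x 1 - a 1) - (b 1 - a 1) * (x 0 - a 0)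

/-- `x` lies in the open left halfplane `L⁻` of the line oriented from `a` to `b`. -/
def leftOf (a b x : Plane) : Prop := 0 < orient a b x

/-- `x` lies in the open right halfplane `L⁺` of the line oriented from `a` to `b`. -/
def rightOf (a b x : Plane) : Prop := orient a b x < 0

/-- `x` and `y` lie strictly on opposite sides of the line through `a` and `b`. -/
def OppositeSides (a b x y : Plane) : Prop := orient a b x * orient a b y < 0

/-- Four points of the plane are concyclic. -/
def Concyclic4 (a b c d : Plane) : Prop :=
  ∃ (o : Plane) (ρ : ℝ), 0 < ρ ∧
    dist a o = ρ ∧ dist b o = ρ ∧ dist c o = ρ ∧ dist d o = ρ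

/-- Five points of the plane are concyclic. -/
def Concyclic5 (a b c d e : Plane) : Prop :=
  ∃ (o : Plane) (ρ : ℝ), 0 < ρ ∧
    dist a o = ρ ∧ dist b o = ρ ∧ dist c o = ρ ∧ dist d o = ρ ∧ dist e o = ρ

/-- `x` lies in the open circumdisc of `a`, `b`, `c` (for non-collinear `a`, `b`, `c`
the circle through them is unique, so this is the usual notion). -/
def InCircumdisc (a b c x : Plane) : Prop :=
  ∃ (o : Plane) (ρ : ℝ), dist a o = ρ ∧ dist b o = ρ ∧ dist c o = ρ ∧ dist x o < ρ

/-- `x` lies strictly outside the circumdisc of `a`, `b`, `c`. -/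
def OutCircumdisc (a b c x : Plane) : Prop :=
  ∃ (o : Plane) (ρ : ℝ), dist a o = ρ ∧ dist b o = ρ ∧ dist c o = ρ ∧ ρ < dist x o

/-- The edge `pq` is Delaunay at time `t` with respect to the set `Q` of trajectories:
there is a closed disc whose boundary circle passes through `p t` and `q t` and whose
interior contains no point of `Q` at time `t`. -/
def DelaunayEdge (Q : Finset Traj) (p q : Traj) (t : ℝ) : Prop :=
  ∃ (o : Plane) (ρ : ℝ), dist (p t) o = ρ ∧ dist (q t) o = ρ ∧
    ∀ x ∈ Q, ¬ dist (x t) o < ρ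

/-- The four moving points `p, q, a, b` are concyclic at time `t`
(a co-circularity event). -/
def CocircAt (p q a b : Traj) (t : ℝ) : Prop :=
  Concyclic4 (p t) (q t) (a t) (b t)

/-- The three moving points `p, q, r` are collinear at time `t`
(a collinearity event). -/
def CollinAt (p q r : Traj) (t : ℝ) : Prop :=
  Collinear ℝ ({p t, q t, r t} : Set Plane)

/-- Pairwise distinctness of four trajectories. -/
def Distinct4 (p q a b : Traj) : Prop :=
  p ≠ q ∧ p ≠ a ∧ p ≠ b ∧ q ≠ a ∧ q ≠ b ∧ a ≠ b

/-- Pairwise distinctness of three trajectories. -/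
def Distinct3 (p q r : Traj) : Prop := p ≠ q ∧ p ≠ r ∧ q ≠ r

/-- The Delaunayhood of the edge `xy` is violated by the pair `u`, `v` at time `t`:
`u t` and `v t` lie strictly on opposite sides of the line through `x t` and `y t`,
and `v t` lies in the open circumdisc of `x t`, `y t`, `u t`. -/
def ViolatedBy (x y u v : Traj) (t : ℝ) : Prop :=
  OppositeSides (x t) (y t) (u t) (v t) ∧ InCircumdisc (x t) (y t) (u t) (v t)

/-- General position assumptions on a finite set of moving points: the motions are
continuous, no two points ever coincide, no five points are ever concyclic, no four
are ever collinear, no two co-circularity or collinearity events occur simultaneously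
and, at each such event, the involved point crosses the relevant circle or line
transversally. -/
structure GenPos (P : Finset Traj) : Prop where
  cont : ∀ p ∈ P, Continuous p
  never_coincide : ∀ p ∈ P, ∀ q ∈ P, p ≠ q → ∀ t : ℝ, p t ≠ q t
  no_five_cocirc : ∀ t : ℝ, ∀ p ∈ P, ∀ q ∈ P, ∀ a ∈ P, ∀ b ∈ P, ∀ e ∈ P,
    Distinct4 p q a b → p ≠ e → q ≠ e → a ≠ e → b ≠ e →
    ¬ Concyclic5 (p t) (q t) (a t) (b t) (e t)
  no_four_collin : ∀ t : ℝ, ∀ p ∈ P, ∀ q ∈ P, ∀ a ∈ P, ∀ b ∈ P,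
    Distinct4 p q a b → ¬ Collinear ℝ ({p t, q t, a t, b t} : Set Plane)
  unique_cocirc : ∀ t : ℝ, ∀ p ∈ P, ∀ q ∈ P, ∀ a ∈ P, ∀ b ∈ P,
    ∀ p' ∈ P, ∀ q' ∈ P, ∀ a' ∈ P, ∀ b' ∈ P,
    Distinct4 p q a b → Distinct4 p' q' a' b' →
    CocircAt p q a b t → CocircAt p' q' a' b' t →
    ({p, q, a, b} : Set Traj) = ({p', q', a', b'} : Set Traj)
  unique_collin : ∀ t : ℝ, ∀ p ∈ P, ∀ q ∈ P, ∀ r ∈ P, ∀ p' ∈ P, ∀ q' ∈ P, ∀ r' ∈ P,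
    Distinct3 p q r → Distinct3 p' q' r' →
    CollinAt p q r t → CollinAt p' q' r' t →
    ({p, q, r} : Set Traj) = ({p', q', r'} : Set Traj)
  cocirc_collin_separate : ∀ t : ℝ, ∀ p ∈ P, ∀ q ∈ P, ∀ a ∈ P, ∀ b ∈ P,
    ∀ p' ∈ P, ∀ q' ∈ P, ∀ r' ∈ P,
    Distinct4 p q a b → Distinct3 p' q' r' →
    CocircAt p q a b t → ¬ CollinAt p' q' r' t
  circle_transversal : ∀ p ∈ P, ∀ q ∈ P, ∀ a ∈ P, ∀ b ∈ P, Distinct4 p q a b →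
    ∀ t : ℝ, CocircAt p q a b t →
    ∃ δ > (0 : ℝ),
      ((∀ u ∈ Set.Ioo (t - δ) t, InCircumdisc (p u) (q u) (a u) (b u)) ∧
        (∀ u ∈ Set.Ioo t (t + δ), OutCircumdisc (p u) (q u) (a u) (b u))) ∨
      ((∀ u ∈ Set.Ioo (t - δ) t, OutCircumdisc (p u) (q u) (a u) (b u)) ∧
        (∀ u ∈ Set.Ioo t (t + δ), InCircumdisc (p u) (q u) (a u) (b u)))
  line_transversal : ∀ p ∈ P, ∀ q ∈ P, ∀ r ∈ P, Distinct3 p q r →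
    ∀ t : ℝ, CollinAt p q r t →
    ∃ δ > (0 : ℝ),
      ((∀ u ∈ Set.Ioo (t - δ) t, leftOf (p u) (q u) (r u)) ∧
        (∀ u ∈ Set.Ioo t (t + δ), rightOf (p u) (q u) (r u))) ∨
      ((∀ u ∈ Set.Ioo (t - δ) t, rightOf (p u) (q u) (r u)) ∧
        (∀ u ∈ Set.Ioo t (t + δ), leftOf (p u) (q u) (r u)))

/-- Pseudo-algebraicity: any four points of `P` are concyclic at most `s` times. -/
def CocircBound (P : Finset Traj) (s : ℕ) : Prop :=
  ∀ p ∈ P, ∀ q ∈ P, ∀ a ∈ P, ∀ b ∈ P, Distinct4 p q a b →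
    {t : ℝ | CocircAt p q a b t}.encard ≤ (s : ℕ∞)

/-- Pseudo-algebraicity: any three points of `P` are collinear at most `c` times. -/
def CollinBound (P : Finset Traj) (c : ℕ) : Prop :=
  ∀ p ∈ P, ∀ q ∈ P, ∀ r ∈ P, Distinct3 p q r →
    {t : ℝ | CollinAt p q r t}.encard ≤ (c : ℕ∞)

/-- A Delaunay co-circularity event of `P` occurs at time `t`: some four (distinct)
points of `P` are concyclic at time `t`, and the open disc bounded by their common
circle contains no point of `P` at time `t`. -/
def DelaunayCocircAt (P : Finset Traj) (t : ℝ) : Prop :=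
  ∃ p ∈ P, ∃ q ∈ P, ∃ a ∈ P, ∃ b ∈ P, Distinct4 p q a b ∧
    ∃ (o : Plane) (ρ : ℝ), 0 < ρ ∧
      dist (p t) o = ρ ∧ dist (q t) o = ρ ∧ dist (a t) o = ρ ∧ dist (b t) o = ρ ∧
      ∀ x ∈ P, ¬ dist (x t) o < ρ

/-- A `k`-shallow co-circularity of `p, q, a, b` at time `t`: the four points are
concyclic and the open disc bounded by their common circle contains at most `k`
points of `P` at time `t`. -/
def ShallowCocircAt (P : Finset Traj) (k : ℕ) (p q a b : Traj) (t : ℝ) : Prop :=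
  ∃ (o : Plane) (ρ : ℝ), 0 < ρ ∧
    dist (p t) o = ρ ∧ dist (q t) o = ρ ∧ dist (a t) o = ρ ∧ dist (b t) o = ρ ∧
    {x : Traj | x ∈ P ∧ dist (x t) o < ρ}.ncard ≤ k

/-- A `k`-shallow collinearity of `p, q, r` at time `t`: the three points are
collinear and one of the two open halfplanes bounded by the line through them
contains at most `k` points of `P` at time `t`. -/
def ShallowCollinAt (P : Finset Traj) (k : ℕ) (p q r : Traj) (t : ℝ) : Prop :=
  CollinAt p q r t ∧ p t ≠ q t ∧
    ({x : Traj | x ∈ P ∧ leftOf (p t) (q t) (x t)}.ncard ≤ k ∨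
      {x : Traj | x ∈ P ∧ rightOf (p t) (q t) (x t)}.ncard ≤ k)

/-- At time `t`, the point `r` lies on the segment `pq` and crosses it transversally
from the open halfplane `L⁻` (left of the oriented line `pq`) to `L⁺`. -/
def CrossesMinusPlus (p q r : Traj) (t : ℝ) : Prop :=
  r t ∈ segment ℝ (p t) (q t) ∧
    ∃ δ > (0 : ℝ),
      (∀ u ∈ Set.Ioo (t - δ) t, leftOf (p u) (q u) (r u)) ∧
      (∀ u ∈ Set.Ioo t (t + δ), rightOf (p u) (q u) (r u))

/-- At time `t`, the point `r` lies on the segment `pq` and crosses it transversally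
from `L⁺` to `L⁻`. -/
def CrossesPlusMinus (p q r : Traj) (t : ℝ) : Prop :=
  r t ∈ segment ℝ (p t) (q t) ∧
    ∃ δ > (0 : ℝ),
      (∀ u ∈ Set.Ioo (t - δ) t, rightOf (p u) (q u) (r u)) ∧
      (∀ u ∈ Set.Ioo t (t + δ), leftOf (p u) (q u) (r u))

/-- A Delaunay crossing `(pq, r, [t₀, t₁])`: the edge `pq` is Delaunay with respect
to `P` at times `t₀` and `t₁` but at no time in `(t₀, t₁)`; `r` lies on the closed
segment `pq` at least once during `[t₀, t₁]`; and `pq` is Delaunay with respect to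
`P ∖ {r}` throughout `[t₀, t₁]`. -/
structure DelaunayCrossing (P : Finset Traj) (p q r : Traj) (t₀ t₁ : ℝ) : Prop where
  lt : t₀ < t₁
  mem_p : p ∈ P
  mem_q : q ∈ P
  mem_r : r ∈ P
  distinct : Distinct3 p q r
  del_start : DelaunayEdge P p q t₀
  del_end : DelaunayEdge P p q t₁
  not_del : ∀ t ∈ Set.Ioo t₀ t₁, ¬ DelaunayEdge P p q t
  hits : ∃ t ∈ Set.Icc t₀ t₁, r t ∈ segment ℝ (p t) (q t)
  del_erase : ∀ t ∈ Set.Icc t₀ t₁, DelaunayEdge (P.erase r) p q t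

/-- A single Delaunay crossing, with the convention that `r` crosses the segment
`pq` from `L⁻` to `L⁺`: a Delaunay crossing in which `r` lies on the segment `pq`
at exactly one time of `[t₀, t₁]`, where it crosses from `L⁻` to `L⁺`.
(It is a clockwise `(p, r)`-crossing and a counterclockwise `(q, r)`-crossing.) -/
structure SingleCrossing (P : Finset Traj) (p q r : Traj) (t₀ t₁ : ℝ) : Prop where
  crossing : DelaunayCrossing P p q r t₀ t₁
  unique_hit : ∀ t ∈ Set.Icc t₀ t₁, ∀ t' ∈ Set.Icc t₀ t₁,
    r t ∈ segment ℝ (p t) (q t) → r t' ∈ segment ℝ (p t') (q t') → t = t'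
  dir : ∀ t ∈ Set.Icc t₀ t₁, r t ∈ segment ℝ (p t) (q t) → CrossesMinusPlus p q r t

/-- A double Delaunay crossing: a Delaunay crossing in which `r` lies on the
segment `pq` at exactly two times of `[t₀, t₁]`. -/
structure DoubleCrossing (P : Finset Traj) (p q r : Traj) (t₀ t₁ : ℝ) : Prop where
  crossing : DelaunayCrossing P p q r t₀ t₁
  two_hits : ∃ u v : ℝ, u ∈ Set.Icc t₀ t₁ ∧ v ∈ Set.Icc t₀ t₁ ∧ u ≠ v ∧
    r u ∈ segment ℝ (p u) (q u) ∧ r v ∈ segment ℝ (p v) (q v) ∧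
    ∀ t ∈ Set.Icc t₀ t₁, r t ∈ segment ℝ (p t) (q t) → t = u ∨ t = v

/-- The point `s` enters the cap `B[p,q,r] ∩ L⁺_pq` at time `t`: just before `t` it
lies strictly outside the circumdisc `B[p,q,r]`, and just after `t` it lies inside
`B[p,q,r]` and in the open right halfplane `L⁺` of the oriented line `pq`. -/
def EntersCapPlus (p q r s : Traj) (t : ℝ) : Prop :=
  ∃ δ > (0 : ℝ),
    (∀ u ∈ Set.Ioo (t - δ) t, OutCircumdisc (p u) (q u) (r u) (s u)) ∧
    (∀ u ∈ Set.Ioo t (t + δ),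
      InCircumdisc (p u) (q u) (r u) (s u) ∧ rightOf (p u) (q u) (s u))

/-- The point `s` leaves the cap `B[p,q,r] ∩ L⁻_pq` at time `t`: just before `t` it
lies inside the circumdisc `B[p,q,r]` and in the open left halfplane `L⁻` of the
oriented line `pq`, and just after `t` it lies strictly outside `B[p,q,r]`. -/
def LeavesCapMinus (p q r s : Traj) (t : ℝ) : Prop :=
  ∃ δ > (0 : ℝ),
    (∀ u ∈ Set.Ioo (t - δ) t,
      InCircumdisc (p u) (q u) (r u) (s u) ∧ leftOf (p u) (q u) (s u)) ∧
    (∀ u ∈ Set.Ioo t (t + δ), OutCircumdisc (p u) (q u) (r u) (s u))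


/-!
Along `(t₀, t₀ + δ)` the violation of `pq` by `a ∈ L⁻` and `b ∈ L⁺` is the strict sign
condition `orient a > 0`, `orient b < 0`, `incircle > 0`, where
`incircle = orient b · ⟪a - p, a - q⟫ - orient a · ⟪b - p, b - q⟫` equals
`orient b · pow(a) - orient a · pow(b)` for the power `pow` with respect to any circle through
`p` and `q`. The Delaunay disc at `t₁` makes the condition fail there, so it fails for a first
time `τ ∈ (t₀, t₁]`, where by continuity the three weak inequalities hold with one equality.
If `orient a = 0`, then `incircle = orient b · ⟪a - p, a - q⟫ ≥ 0` with `orient b < 0` (no four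
points are collinear) puts `a` on the segment `pq`; as `a` was in `L⁻` just before `τ`,
transversality makes this a crossing from `L⁻` to `L⁺`. The case `orient b = 0` is symmetric,
and `incircle = 0` with `orient a > 0 > orient b` means that `b` is on the circle `pqa`.
-/

open Filter Set
open scoped Topology RealInnerProductSpace

namespace Plane

lemma inner_eq (x y : Plane) : ⟪x, y⟫ = x 0 * y 0 + x 1 * y 1 := by
  simp [EuclideanSpace.inner_eq_star_dotProduct, Fin.sum_univ_two, dotProduct, mul_comm]

lemma dist_sq_eq (x y : Plane) : dist x y ^ 2 = (x 0 - y 0) ^ 2 + (x 1 - y 1) ^ 2 := by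
  rw [EuclideanSpace.dist_eq, Real.sq_sqrt (by positivity)]
  simp [Fin.sum_univ_two, Real.dist_eq, sq_abs]

end Plane

lemma orient_self_left (p x : Plane) : orient p p x = 0 := by
  simp [orient]

lemma orient_lineMap (p q : Plane) (r : ℝ) : orient p q (AffineMap.lineMap p q r) = 0 := by
  simp only [orient, AffineMap.lineMap_apply_module', PiLp.add_apply, PiLp.smul_apply,
    PiLp.sub_apply, smul_eq_mul]
  ring

lemma orient_eq_zero_of_collinear {p q a : Plane} (h : Collinear ℝ ({p, q, a} : Set Plane)) :
    orient p q a = 0 := by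
  rcases eq_or_ne p q with rfl | hpq
  · exact orient_self_left p a
  obtain ⟨r, rfl⟩ := mem_affineSpan_pair_iff_exists_lineMap_eq.1 <|
    h.mem_affineSpan_of_mem_of_ne (p₃ := a) (by simp) (by simp) (by simp) hpq
  exact orient_lineMap p q r

lemma mem_affineSpan_pair_of_orient_eq_zero {p q a : Plane} (hpq : p ≠ q)
    (h : orient p q a = 0) : a ∈ line[ℝ, p, q] := by
  have hd : (q 0 - p 0) ^ 2 + (q 1 - p 1) ^ 2 ≠ 0 := by
    rw [← Plane.dist_sq_eq]
    exact pow_ne_zero 2 (dist_ne_zero.2 hpq.symm)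
  refine mem_affineSpan_pair_iff_exists_lineMap_eq.2
    ⟨((a 0 - p 0) * (q 0 - p 0) + (a 1 - p 1) * (q 1 - p 1)) /
      ((q 0 - p 0) ^ 2 + (q 1 - p 1) ^ 2), ?_⟩
  unfold orient at h
  ext i
  fin_cases i <;>
    simp only [Fin.zero_eta, Fin.mk_one, AffineMap.lineMap_apply_module', PiLp.add_apply,
      PiLp.smul_apply, PiLp.sub_apply, smul_eq_mul] <;> field_simp
  · linear_combination (q 1 - p 1) * h
  · linear_combination -(q 0 - p 0) * h

lemma collinear_of_orient_eq_zero {p q a b : Plane} (hpq : p ≠ q) (ha : orient p q a = 0)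
    (hb : orient p q b = 0) : Collinear ℝ ({p, q, a, b} : Set Plane) := by
  have h := collinear_insert_insert_of_mem_affineSpan_pair
    (mem_affineSpan_pair_of_orient_eq_zero hpq ha) (mem_affineSpan_pair_of_orient_eq_zero hpq hb)
  have hset : ({p, q, a, b} : Set Plane) = {a, b, p, q} := by
    ext x
    simp only [Set.mem_insert_iff, Set.mem_singleton_iff]
    tauto
  rwa [hset]

lemma mem_segment_of_orient_eq_zero {p q a : Plane} (hpq : p ≠ q) (h : orient p q a = 0)
    (hdot : ⟪a - p, a - q⟫ ≤ 0) : a ∈ segment ℝ p q := by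
  obtain ⟨s, rfl⟩ :=
    mem_affineSpan_pair_iff_exists_lineMap_eq.1 (mem_affineSpan_pair_of_orient_eq_zero hpq h)
  have hpos : 0 < ‖q - p‖ ^ 2 := by positivity [sub_ne_zero.2 hpq.symm]
  have hinner : ⟪AffineMap.lineMap p q s - p, AffineMap.lineMap p q s - q⟫ =
      -(s * (1 - s)) * ‖q - p‖ ^ 2 := by
    rw [← vsub_eq_sub, ← vsub_eq_sub (AffineMap.lineMap p q s), AffineMap.lineMap_vsub_left,
      AffineMap.lineMap_vsub_right, vsub_eq_sub, vsub_eq_sub, inner_smul_left, inner_smul_right,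
      ← neg_sub q p, inner_neg_right, real_inner_self_eq_norm_sq]
    simp only [conj_trivial]
    ring
  have hs : 0 ≤ s * (1 - s) := nonneg_of_mul_nonneg_left (by linarith) hpos
  rw [segment_eq_image_lineMap]
  refine ⟨s, ⟨?_, ?_⟩, rfl⟩ <;> nlinarith

lemma exists_circle_of_orient_ne_zero {p q a : Plane} (h : orient p q a ≠ 0) :
    ∃ (o : Plane) (ρ : ℝ), dist p o = ρ ∧ dist q o = ρ ∧ dist a o = ρ := by
  let T : Affine.Simplex ℝ Plane 2 :=
    ⟨![p, q, a], affineIndependent_iff_not_collinear_set.2 (h ∘ orient_eq_zero_of_collinear)⟩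
  exact ⟨T.circumcenter, T.circumradius, T.dist_circumcenter_eq_circumradius 0,
    T.dist_circumcenter_eq_circumradius 1, T.dist_circumcenter_eq_circumradius 2⟩

/-- `-orient p q a` times the power of `b` with respect to the circle `pqa` (`incircle_eq`). -/
def incircle (p q a b : Plane) : ℝ :=
  orient p q b * ⟪a - p, a - q⟫ - orient p q a * ⟪b - p, b - q⟫

/-- The power `dist x o ^ 2 - ρ ^ 2` of `x` with respect to a circle through `p` and `q`
differs from `⟪x - p, x - q⟫` by an affine function of `x` vanishing at `p` and `q`,
i.e. by a multiple of `orient p q x`, which cancels in `incircle`. -/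
lemma incircle_eq {p q a b o : Plane} {ρ : ℝ} (hp : dist p o = ρ) (hq : dist q o = ρ) :
    incircle p q a b =
      orient p q b * (dist a o ^ 2 - ρ ^ 2) - orient p q a * (dist b o ^ 2 - ρ ^ 2) := by
  have hp2 := hp ▸ Plane.dist_sq_eq p o
  have hq2 := hq ▸ Plane.dist_sq_eq q o
  simp only [incircle, orient, Plane.inner_eq, Plane.dist_sq_eq, PiLp.sub_apply]
  linear_combination
    ((a 0 - p 0) * (b 1 - p 1) - (a 1 - p 1) * (b 0 - p 0)) * hq2
    - ((a 0 - q 0) * (b 1 - q 1) - (a 1 - q 1) * (b 0 - q 0)) * hp2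

/-- The violation of `pq` by `a ∈ L⁻` and `b ∈ L⁺`, as strict sign conditions. -/
def IsViolation (p q a b : Plane) : Prop :=
  0 < orient p q a ∧ orient p q b < 0 ∧ 0 < incircle p q a b

lemma isViolation_of_inCircumdisc {p q a b : Plane} (ha : leftOf p q a) (hb : rightOf p q b)
    (hin : InCircumdisc p q a b) : IsViolation p q a b := by
  obtain ⟨o, ρ, hpo, hqo, hao, hbo⟩ := hin
  have hb2 : dist b o ^ 2 < ρ ^ 2 := pow_lt_pow_left₀ hbo dist_nonneg two_ne_zero
  refine ⟨ha, hb, ?_⟩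
  rw [incircle_eq hpo hqo, hao]
  unfold leftOf at ha
  nlinarith

lemma not_isViolation_of_le_dist {p q a b o : Plane} {ρ : ℝ} (hp : dist p o = ρ)
    (hq : dist q o = ρ) (ha : ρ ≤ dist a o) (hb : ρ ≤ dist b o) : ¬ IsViolation p q a b := by
  rintro ⟨hpa, hpb, hH⟩
  have hρ : 0 ≤ ρ := hp ▸ dist_nonneg
  have ha2 : ρ ^ 2 ≤ dist a o ^ 2 := pow_le_pow_left₀ hρ ha 2
  have hb2 : ρ ^ 2 ≤ dist b o ^ 2 := pow_le_pow_left₀ hρ hb 2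
  rw [incircle_eq hp hq] at hH
  nlinarith [mul_nonneg hpa.le (sub_nonneg.2 hb2), mul_nonneg (neg_nonneg.2 hpb.le)
    (sub_nonneg.2 ha2)]

lemma concyclic4_of_incircle_eq_zero {p q a b : Plane} (ha : orient p q a ≠ 0)
    (h : incircle p q a b = 0) : Concyclic4 p q a b := by
  obtain ⟨o, ρ, hpo, hqo, hao⟩ := exists_circle_of_orient_ne_zero ha
  have hρ : 0 < ρ := by
    refine (hpo ▸ dist_nonneg).lt_of_ne fun hρ => ha ?_
    rw [dist_eq_zero.1 (hpo.trans hρ.symm), dist_eq_zero.1 (hqo.trans hρ.symm)]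
    exact orient_self_left o a
  have hb2 : dist b o ^ 2 = ρ ^ 2 := by
    rw [incircle_eq hpo hqo, hao, sub_self, mul_zero, zero_sub, neg_eq_zero] at h
    exact sub_eq_zero.1 ((mul_eq_zero.1 h).resolve_left ha)
  exact ⟨o, ρ, hρ, hpo, hqo, hao, (pow_left_inj₀ dist_nonneg hρ.le two_ne_zero).1 hb2⟩

lemma mem_segment_or_concyclic {p q a b : Plane} (hpq : p ≠ q)
    (hcol : ¬ Collinear ℝ ({p, q, a, b} : Set Plane)) (hF : 0 ≤ orient p q a)
    (hG : orient p q b ≤ 0) (hH : 0 ≤ incircle p q a b) (hnot : ¬ IsViolation p q a b) :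
    a ∈ segment ℝ p q ∨ b ∈ segment ℝ p q ∨ (Concyclic4 p q a b ∧ OppositeSides p q a b) := by
  unfold incircle at hH
  rcases hF.eq_or_lt with hF0 | hFpos
  · have hGneg : orient p q b < 0 :=
      hG.lt_of_ne fun hG0 => hcol (collinear_of_orient_eq_zero hpq hF0.symm hG0)
    rw [← hF0, zero_mul, sub_zero] at hH
    exact Or.inl
      (mem_segment_of_orient_eq_zero hpq hF0.symm (nonpos_of_mul_nonneg_right hH hGneg))
  rcases hG.eq_or_lt with hG0 | hGneg
  · rw [hG0, zero_mul, zero_sub, neg_nonneg] at hH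
    exact Or.inr (Or.inl
      (mem_segment_of_orient_eq_zero hpq hG0 (nonpos_of_mul_nonpos_right hH hFpos)))
  have hH0 : incircle p q a b = 0 :=
    (hH.eq_or_lt.resolve_right fun h => hnot ⟨hFpos, hGneg, h⟩).symm
  exact Or.inr (Or.inr
    ⟨concyclic4_of_incircle_eq_zero hFpos.ne' hH0, mul_neg_of_pos_of_neg hFpos hGneg⟩)

section Kinetic

variable {X : Type*} [TopologicalSpace X] {p q a b : X → Plane}

lemma Continuous.orient (hp : Continuous p) (hq : Continuous q) (ha : Continuous a) :
    Continuous fun t => orient (p t) (q t) (a t) := by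
  unfold _root_.orient
  fun_prop

lemma Continuous.incircle (hp : Continuous p) (hq : Continuous q) (ha : Continuous a)
    (hb : Continuous b) : Continuous fun t => incircle (p t) (q t) (a t) (b t) := by
  unfold _root_.incircle
  exact ((hp.orient hq hb).mul (by fun_prop)).sub ((hp.orient hq ha).mul (by fun_prop))

lemma isOpen_setOf_isViolation (hp : Continuous p) (hq : Continuous q) (ha : Continuous a)
    (hb : Continuous b) : IsOpen {t | IsViolation (p t) (q t) (a t) (b t)} :=
  (isOpen_lt continuous_const (hp.orient hq ha)).inter <|
    (isOpen_lt (hp.orient hq hb) continuous_const).inter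
      (isOpen_lt continuous_const (hp.incircle hq ha hb))

end Kinetic

lemma exists_first_notMem {U : Set ℝ} (hU : IsOpen U) {t t' : ℝ} (htt' : t ≤ t')
    (ht : t ∈ U) (ht' : t' ∉ U) : ∃ τ ∈ Ioc t t', τ ∉ U ∧ ∀ᶠ u in 𝓝[<] τ, u ∈ U := by
  set S := Uᶜ ∩ Icc t t'
  have hS : IsClosed S := hU.isClosed_compl.inter isClosed_Icc
  have hbdd : BddBelow S := bddBelow_Icc.mono inter_subset_right
  have hτ : sInf S ∈ S := hS.csInf_mem ⟨t', ht', htt', le_rfl⟩ hbdd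
  have htτ : t < sInf S := hτ.2.1.lt_of_ne fun h => hτ.1 (h ▸ ht)
  refine ⟨sInf S, ⟨htτ, hτ.2.2⟩, hτ.1, mem_of_superset (Ico_mem_nhdsLT htτ) fun u hu => ?_⟩
  by_contra hu'
  exact notMem_of_lt_csInf hu.2 hbdd ⟨hu', hu.1, hu.2.le.trans hτ.2.2⟩

lemma weak_isViolation_of_eventually {p q a b : ℝ → Plane} (hp : Continuous p)
    (hq : Continuous q) (ha : Continuous a) (hb : Continuous b) {τ : ℝ}
    (h : ∀ᶠ u in 𝓝[<] τ, IsViolation (p u) (q u) (a u) (b u)) :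
    0 ≤ orient (p τ) (q τ) (a τ) ∧ orient (p τ) (q τ) (b τ) ≤ 0 ∧
      0 ≤ incircle (p τ) (q τ) (a τ) (b τ) :=
  ⟨ge_of_tendsto (hp.orient hq ha).continuousWithinAt (h.mono fun _ hu => hu.1.le),
    le_of_tendsto (hp.orient hq hb).continuousWithinAt (h.mono fun _ hu => hu.2.1.le),
    ge_of_tendsto (hp.incircle hq ha hb).continuousWithinAt (h.mono fun _ hu => hu.2.2.le)⟩

lemma collinAt_of_mem_segment {p q r : Traj} {t : ℝ} (h : r t ∈ segment ℝ (p t) (q t)) :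
    CollinAt p q r t := by
  have := (mem_segment_iff_wbtw.1 h).collinear
  rwa [Set.pair_comm] at this

namespace GenPos

variable {P : Finset Traj} {p q r : Traj} {τ : ℝ}

lemma crossesMinusPlus_of_mem_segment (hP : GenPos P) (hp : p ∈ P) (hq : q ∈ P) (hr : r ∈ P)
    (hd : Distinct3 p q r) (hseg : r τ ∈ segment ℝ (p τ) (q τ))
    (hleft : ∀ᶠ u in 𝓝[<] τ, leftOf (p u) (q u) (r u)) : CrossesMinusPlus p q r τ := by
  obtain ⟨δ, hδ, ⟨hl, hr⟩ | ⟨hr, -⟩⟩ :=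
    hP.line_transversal p hp q hq r hr hd τ (collinAt_of_mem_segment hseg)
  · exact ⟨hseg, δ, hδ, hl, hr⟩
  · obtain ⟨u, hul, hur⟩ :=
      (hleft.and (mem_of_superset (Ioo_mem_nhdsLT (by linarith)) hr)).exists
    exact absurd hul (lt_asymm hur)

lemma crossesPlusMinus_of_mem_segment (hP : GenPos P) (hp : p ∈ P) (hq : q ∈ P) (hr : r ∈ P)
    (hd : Distinct3 p q r) (hseg : r τ ∈ segment ℝ (p τ) (q τ))
    (hright : ∀ᶠ u in 𝓝[<] τ, rightOf (p u) (q u) (r u)) : CrossesPlusMinus p q r τ := by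
  obtain ⟨δ, hδ, ⟨hl, -⟩ | ⟨hr, hl⟩⟩ :=
    hP.line_transversal p hp q hq r hr hd τ (collinAt_of_mem_segment hseg)
  · obtain ⟨u, hur, hul⟩ :=
      (hright.and (mem_of_superset (Ioo_mem_nhdsLT (by linarith)) hl)).exists
    exact absurd hul (lt_asymm hur)
  · exact ⟨hseg, δ, hδ, hr, hl⟩

end GenPos

theorem statement2_general (P : Finset Traj)
    (hP : GenPos P)
    (p q a b : Traj) (hp : p ∈ P) (hq : q ∈ P) (ha : a ∈ P) (hb : b ∈ P)
    (hd : Distinct4 p q a b)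
    (t₀ δ : ℝ) (hδ : 0 < δ)
    (hviol : ∀ t ∈ Set.Ioo t₀ (t₀ + δ),
      leftOf (p t) (q t) (a t) ∧ rightOf (p t) (q t) (b t) ∧
        InCircumdisc (p t) (q t) (a t) (b t))
    (t₁ : ℝ) (ht : t₀ < t₁) (hdel : DelaunayEdge P p q t₁) :
    ∃ t ∈ Set.Ioc t₀ t₁,
      CrossesMinusPlus p q a t ∨
      CrossesPlusMinus p q b t ∨
      (CocircAt p q a b t ∧ OppositeSides (p t) (q t) (a t) (b t)) := by
  obtain ⟨hpq, hpa, hpb, hqa, hqb, hab⟩ := hd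
  have hcont := hP.cont
  obtain ⟨t', ht₀t', ht'⟩ := exists_between (lt_min (lt_add_of_pos_right t₀ hδ) ht)
  obtain ⟨ht'δ, ht't₁⟩ := lt_min_iff.1 ht'
  have hstart : IsViolation (p t') (q t') (a t') (b t') :=
    let ⟨hl, hr, hin⟩ := hviol t' ⟨ht₀t', ht'δ⟩
    isViolation_of_inCircumdisc hl hr hin
  have hend : ¬ IsViolation (p t₁) (q t₁) (a t₁) (b t₁) := by
    obtain ⟨o, ρ, hpo, hqo, hempty⟩ := hdel
    exact not_isViolation_of_le_dist hpo hqo (not_lt.1 (hempty a ha)) (not_lt.1 (hempty b hb))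
  obtain ⟨τ, ⟨ht'τ, hτt₁⟩, hτ, hbefore⟩ := exists_first_notMem
    (isOpen_setOf_isViolation (hcont p hp) (hcont q hq) (hcont a ha) (hcont b hb))
    ht't₁.le hstart hend
  obtain ⟨hF, hG, hH⟩ :=
    weak_isViolation_of_eventually (hcont p hp) (hcont q hq) (hcont a ha) (hcont b hb) hbefore
  refine ⟨τ, ⟨ht₀t'.trans ht'τ, hτt₁⟩, ?_⟩
  rcases mem_segment_or_concyclic (hP.never_coincide p hp q hq hpq τ)
      (hP.no_four_collin τ p hp q hq a ha b hb ⟨hpq, hpa, hpb, hqa, hqb, hab⟩) hF hG hH hτ with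
    haseg | hbseg | hcocirc
  · exact Or.inl (hP.crossesMinusPlus_of_mem_segment hp hq ha ⟨hpq, hpa, hqa⟩ haseg
      (hbefore.mono fun _ h => h.1))
  · exact Or.inr (Or.inl (hP.crossesPlusMinus_of_mem_segment hp hq hb ⟨hpq, hpb, hqb⟩ hbseg
      (hbefore.mono fun _ h => h.2.1)))
  · exact Or.inr (Or.inr hcocirc)

/-- (Lemma 3.1 of the paper.) If the Delaunayhood of `pq` is
violated by `a ∈ L⁻_pq` and `b ∈ L⁺_pq` throughout some nonempty interval
`(t₀, t₀+δ)`, and `pq` is Delaunay at some later time `t₁ > t₀`, then during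
`(t₀,t₁]` either `a` crosses the segment `pq` from `L⁻` to `L⁺`, or `b` crosses it
from `L⁺` to `L⁻`, or `p,q,a,b` are concyclic with `a`, `b` on opposite sides of the
line through `p` and `q`. -/
theorem statement2 (s c : ℕ) (P : Finset Traj)
    (hP : GenPos P) (hs : CocircBound P s) (hc : CollinBound P c)
    (p q a b : Traj) (hp : p ∈ P) (hq : q ∈ P) (ha : a ∈ P) (hb : b ∈ P)
    (hd : Distinct4 p q a b)
    (t₀ δ : ℝ) (hδ : 0 < δ)
    (hviol : ∀ t ∈ Set.Ioo t₀ (t₀ + δ),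
      leftOf (p t) (q t) (a t) ∧ rightOf (p t) (q t) (b t) ∧
        InCircumdisc (p t) (q t) (a t) (b t))
    (t₁ : ℝ) (ht : t₀ < t₁) (hdel : DelaunayEdge P p q t₁) :
    ∃ t ∈ Set.Ioc t₀ t₁,
      CrossesMinusPlus p q a t ∨
      CrossesPlusMinus p q b t ∨
      (CocircAt p q a b t ∧ OppositeSides (p t) (q t) (a t) (b t)) :=
  statement2_general P hP p q a b hp hq ha hb hd t₀ δ hδ hviol t₁ ht hdel
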